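/- The characteristic speeds λ± = ((1-s²)v_⊥ ± s√((1-|v|²)Q))/(1 - s²|v|²) of the RHD system satisfy |λ±| < 1 whenever 0 < s < 1, |v| < 1, and |v_⊥| ≤ |v|. -/
import Mathlib


/-- The RHD characteristic speeds `λ± = ((1-s²)v⊥ ± s√((1-‖v‖²)Q))/(1 - s²‖v‖²)`
satisfy `|λ±| < 1` when `0 < s < 1`, `‖v‖ < 1`, `|v⊥| ≤ ‖v‖`. -/
theorem rhd_wave_speeds_subluminal (d : ℕ) (s : ℝ) (v : EuclideanSpace ℝ (Fin d))
    (vperp : ℝ) (hs0 : 0 < s) (hs1 : s < 1) (hv : ‖v‖ < 1) (hperp : |vperp| ≤ ‖v‖)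
    (Q lamPlus lamMinus : ℝ)
    (hQ : Q = 1 - vperp ^ 2 - s ^ 2 * (‖v‖ ^ 2 - vperp ^ 2))
    (hplus : lamPlus = ((1 - s ^ 2) * vperp + s * Real.sqrt ((1 - ‖v‖ ^ 2) * Q))
      / (1 - s ^ 2 * ‖v‖ ^ 2))
    (hminus : lamMinus = ((1 - s ^ 2) * vperp - s * Real.sqrt ((1 - ‖v‖ ^ 2) * Q))
      / (1 - s ^ 2 * ‖v‖ ^ 2)) :
    |lamPlus| < 1 ∧ |lamMinus| < 1 := by
  set V := ‖v‖ with hV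
  have hV0 : 0 ≤ V := norm_nonneg v
  have hw0 : 0 ≤ |vperp| := abs_nonneg vperp
  have hw2 : vperp ^ 2 ≤ V ^ 2 := by nlinarith [sq_abs vperp]
  have hB : (0:ℝ) < 1 - s ^ 2 := by nlinarith
  have hA : (0:ℝ) < 1 - s ^ 2 * V ^ 2 := by nlinarith
  have hV2 : V ^ 2 ≤ 1 := by nlinarith
  have hX : 0 ≤ (1 - V ^ 2) * Q := by nlinarith [mul_nonneg hB.le (sub_nonneg.2 hw2)]
  set r := Real.sqrt ((1 - V ^ 2) * Q) with hr
  have hr0 : 0 ≤ r := Real.sqrt_nonneg _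
  have hr2 : r ^ 2 = (1 - V ^ 2) * Q := Real.sq_sqrt hX
  have hw1 : |vperp| < 1 := lt_of_le_of_lt hperp hv
  have h1 : 0 < 1 - s ^ 2 * V ^ 2 - (1 - s ^ 2) * |vperp| := by
    nlinarith [mul_pos (by linarith : (0:ℝ) < 1 - V) (by nlinarith : (0:ℝ) < 1 + s ^ 2 * V),
      mul_nonneg hB.le (sub_nonneg.2 hperp)]
  have hprod : 0 < (1 - s ^ 2 * V ^ 2) * ((1 - s ^ 2) * (1 - |vperp|) ^ 2) := by
    exact mul_pos hA (mul_pos hB (pow_pos (by linarith) 2))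
  have hsq : (s * r) ^ 2 < (1 - s ^ 2 * V ^ 2 - (1 - s ^ 2) * |vperp|) ^ 2 := by
    have : (s * r) ^ 2 = s ^ 2 * ((1 - V ^ 2) * Q) := by rw [mul_pow, hr2]
    rw [this, hQ, ← sq_abs vperp]
    nlinarith [hprod, sq_abs vperp]
  have key : (1 - s ^ 2) * |vperp| + s * r < 1 - s ^ 2 * V ^ 2 := by
    have := lt_of_pow_lt_pow_left₀ 2 h1.le hsq
    linarith
  have hnum : ∀ x : ℝ, |x| = 1 → |(1 - s ^ 2) * vperp + x * (s * r)| < 1 - s ^ 2 * V ^ 2 := by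
    intro x hx
    calc |(1 - s ^ 2) * vperp + x * (s * r)| ≤ |(1 - s ^ 2) * vperp| + |x * (s * r)| :=
          abs_add_le _ _
      _ = (1 - s ^ 2) * |vperp| + s * r := by
          rw [abs_mul, abs_mul, hx, abs_of_pos hB, abs_of_nonneg (by positivity : 0 ≤ s * r),
            one_mul]
      _ < 1 - s ^ 2 * V ^ 2 := key
  constructor
  · rw [hplus, abs_div, abs_of_pos hA, div_lt_one hA]
    have := hnum 1 (by norm_num)
    simpa using this
  · rw [hminus, abs_div, abs_of_pos hA, div_lt_one hA]
    have := hnum (-1) (by norm_num)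
    rw [neg_one_mul] at this
    simpa [sub_eq_add_neg] using this
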